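/- arXiv:1312.4444 — 2 statements merged into one kernel-verified Lean document; each statement's English description precedes it below -/
import Mathlib

section
/- Let L > 0, T > 0, b ∈ ℝ, and let u : [0,T] × ℝ × [0,L] → ℝ be infinitely differentiable, vanishing whenever |x| ≥ R for some R > 0, and satisfying u(t,x,0) = u(t,x,L) = 0 for all t, x. Let f₀, f₁, f₂ : [0,T] × ℝ × [0,L] → ℝ be continuously differentiable, and suppose u satisfies pointwise the equation u_t + b u_x + u_xxx + u_xyy = f₀ + ∂_x f₁ + ∂_y f₂. Then for every t ∈ [0,T]: ∬_Σ u²(t,x,y) dx dy = ∬_Σ u²(0,x,y) dx dy + 2 ∫₀^t ∬_Σ ( f₀ u − f₁ u_x − f₂ u_y ) dx dy dτ. -/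
/-!
Multiplying the equation by `2u` and using `u_xy = u_yx`,
`2 u u_t = 2 (f₀ u - f₁ u_x - f₂ u_y) + ∂ₓΦ + ∂_yΨ` with
`Φ = 2 u f₁ - b u² - 2 u u_xx + u_x² - 2 u u_yy - u_y²` and `Ψ = 2 u f₂ + 2 u_x u_y`.
`∂ₓΦ` integrates to zero over `x ∈ ℝ` since `Φ` vanishes for large `|x|`, and `∂_yΨ` integrates
to zero over `y ∈ (0, L)` since `u` and `u_x` vanish at `y = 0, L`. Integrating
`2 u u_t = ∂ₜ(u²)` in time and exchanging the order of integration (Fubini applies because all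
integrands are continuous and vanish for large `|x|`) gives the identity.
-/

open MeasureTheory Real Set

noncomputable section

/-- Partial derivative in the time variable. -/
def Dt (u : ℝ → ℝ → ℝ → ℝ) (t x y : ℝ) : ℝ := deriv (fun s => u s x y) t

/-- Partial derivative in `x`. -/
def Dx (u : ℝ → ℝ → ℝ → ℝ) (t x y : ℝ) : ℝ := deriv (fun s => u t s y) x

/-- Partial derivative in `y`. -/
def Dy (u : ℝ → ℝ → ℝ → ℝ) (t x y : ℝ) : ℝ := deriv (fun s => u t x s) y

def uncurry3 (u : ℝ → ℝ → ℝ → ℝ) (p : ℝ × ℝ × ℝ) : ℝ := u p.1 p.2.1 p.2.2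

section PartialDerivatives

variable {u : ℝ → ℝ → ℝ → ℝ} {t x y : ℝ}

theorem hasDerivAt_Dt (hu : DifferentiableAt ℝ (uncurry3 u) (t, x, y)) :
    HasDerivAt (fun s => u s x y) (Dt u t x y) t := by
  exact (hu.comp t (by fun_prop : DifferentiableAt ℝ (fun s : ℝ => (s, x, y)) t)).hasDerivAt

theorem hasDerivAt_Dx (hu : DifferentiableAt ℝ (uncurry3 u) (t, x, y)) :
    HasDerivAt (fun s => u t s y) (Dx u t x y) x := by
  exact (hu.comp x (by fun_prop : DifferentiableAt ℝ (fun s : ℝ => (t, s, y)) x)).hasDerivAt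

theorem hasDerivAt_Dy (hu : DifferentiableAt ℝ (uncurry3 u) (t, x, y)) :
    HasDerivAt (fun s => u t x s) (Dy u t x y) y := by
  exact (hu.comp y (by fun_prop : DifferentiableAt ℝ (fun s : ℝ => (t, x, s)) y)).hasDerivAt

theorem uncurry3_Dt (hu : Differentiable ℝ (uncurry3 u)) :
    uncurry3 (Dt u) = fun p => fderiv ℝ (uncurry3 u) p (1, 0, 0) := by
  ext ⟨t, x, y⟩
  exact ((hu _).hasFDerivAt.comp_hasDerivAt t
    ((hasDerivAt_id t).prodMk ((hasDerivAt_const t x).prodMk (hasDerivAt_const t y)))).deriv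

theorem uncurry3_Dx (hu : Differentiable ℝ (uncurry3 u)) :
    uncurry3 (Dx u) = fun p => fderiv ℝ (uncurry3 u) p (0, 1, 0) := by
  ext ⟨t, x, y⟩
  exact ((hu _).hasFDerivAt.comp_hasDerivAt x
    ((hasDerivAt_const x t).prodMk ((hasDerivAt_id x).prodMk (hasDerivAt_const x y)))).deriv

theorem uncurry3_Dy (hu : Differentiable ℝ (uncurry3 u)) :
    uncurry3 (Dy u) = fun p => fderiv ℝ (uncurry3 u) p (0, 0, 1) := by
  ext ⟨t, x, y⟩
  exact ((hu _).hasFDerivAt.comp_hasDerivAt y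
    ((hasDerivAt_const y t).prodMk ((hasDerivAt_const y x).prodMk (hasDerivAt_id y)))).deriv

variable {m n : WithTop ℕ∞}

theorem contDiff_Dt (hu : ContDiff ℝ n (uncurry3 u)) (hmn : m + 1 ≤ n) :
    ContDiff ℝ m (uncurry3 (Dt u)) := by
  rw [uncurry3_Dt ((hu.of_le (le_add_self.trans hmn)).differentiable one_ne_zero)]
  exact (hu.fderiv_right hmn).clm_apply contDiff_const

theorem contDiff_Dx (hu : ContDiff ℝ n (uncurry3 u)) (hmn : m + 1 ≤ n) :
    ContDiff ℝ m (uncurry3 (Dx u)) := by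
  rw [uncurry3_Dx ((hu.of_le (le_add_self.trans hmn)).differentiable one_ne_zero)]
  exact (hu.fderiv_right hmn).clm_apply contDiff_const

theorem contDiff_Dy (hu : ContDiff ℝ n (uncurry3 u)) (hmn : m + 1 ≤ n) :
    ContDiff ℝ m (uncurry3 (Dy u)) := by
  rw [uncurry3_Dy ((hu.of_le (le_add_self.trans hmn)).differentiable one_ne_zero)]
  exact (hu.fderiv_right hmn).clm_apply contDiff_const

theorem fderiv_fderiv_apply_comm {E : Type*} [NormedAddCommGroup E] [NormedSpace ℝ E]
    {V : E → ℝ} (hV : ContDiff ℝ 2 V) (p v w : E) :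
    fderiv ℝ (fun q => fderiv ℝ V q w) p v = fderiv ℝ (fun q => fderiv ℝ V q v) p w := by
  have hV' : Differentiable ℝ (fderiv ℝ V) := (hV.fderiv_right le_rfl).differentiable one_ne_zero
  rw [fderiv_clm_apply (hV' p) (differentiableAt_const w),
    fderiv_clm_apply (hV' p) (differentiableAt_const v)]
  simpa using hV.contDiffAt.isSymmSndFDerivAt (by simp) v w

theorem Dx_Dy_comm (hu : ContDiff ℝ 2 (uncurry3 u)) : Dx (Dy u) = Dy (Dx u) := by
  have hd : Differentiable ℝ (uncurry3 u) := hu.differentiable two_ne_zero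
  ext t x y
  change uncurry3 (Dx (Dy u)) (t, x, y) = uncurry3 (Dy (Dx u)) (t, x, y)
  rw [uncurry3_Dx ((contDiff_Dy hu le_rfl).differentiable one_ne_zero),
    uncurry3_Dy ((contDiff_Dx hu le_rfl).differentiable one_ne_zero), uncurry3_Dx hd,
    uncurry3_Dy hd]
  exact fderiv_fderiv_apply_comm hu _ _ _

end PartialDerivatives

def VanishesOffSlab (R : ℝ) (u : ℝ → ℝ → ℝ → ℝ) : Prop := ∀ t x y, R < |x| → u t x y = 0

namespace VanishesOffSlab

variable {R : ℝ} {u : ℝ → ℝ → ℝ → ℝ}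

theorem Dx (h : VanishesOffSlab R u) : VanishesOffSlab R (Dx u) := by
  intro t x y hx
  have hzero : (fun s => u t s y) =ᶠ[nhds x] fun _ => 0 :=
    Filter.eventuallyEq_of_mem ((isOpen_lt continuous_const continuous_abs).mem_nhds hx)
      fun s hs => h t s y hs
  exact hzero.deriv_eq.trans (deriv_const x 0)

theorem Dy (h : VanishesOffSlab R u) : VanishesOffSlab R (Dy u) := by
  intro t x y hx
  simp [_root_.Dy, funext fun s => h t x s hx]

end VanishesOffSlab

theorem Dx_eq_zero_of_forall {u : ℝ → ℝ → ℝ → ℝ} {t y : ℝ} (h : ∀ x, u t x y = 0) (x : ℝ) :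
    Dx u t x y = 0 := by
  simp [Dx, funext h]

def fluxX (b : ℝ) (u f₁ : ℝ → ℝ → ℝ → ℝ) (t x y : ℝ) : ℝ :=
  2 * u t x y * f₁ t x y - b * u t x y ^ 2 - 2 * u t x y * Dx (Dx u) t x y + Dx u t x y ^ 2
    - 2 * u t x y * Dy (Dy u) t x y - Dy u t x y ^ 2

def fluxY (u f₂ : ℝ → ℝ → ℝ → ℝ) (t x y : ℝ) : ℝ :=
  2 * u t x y * f₂ t x y + 2 * Dx u t x y * Dy u t x y

section Fluxes

variable {b R : ℝ} {u f₀ f₁ f₂ : ℝ → ℝ → ℝ → ℝ}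

theorem energy_density_identity (hu : ContDiff ℝ 3 (uncurry3 u))
    (hf₁ : Differentiable ℝ (uncurry3 f₁)) (hf₂ : Differentiable ℝ (uncurry3 f₂)) (t x y : ℝ) :
    2 * u t x y * (Dt u t x y + b * Dx u t x y + Dx (Dx (Dx u)) t x y + Dx (Dy (Dy u)) t x y
        - (f₀ t x y + Dx f₁ t x y + Dy f₂ t x y))
      = 2 * u t x y * Dt u t x y
        - 2 * (f₀ t x y * u t x y - f₁ t x y * Dx u t x y - f₂ t x y * Dy u t x y)
        - Dx (fluxX b u f₁) t x y - Dy (fluxY u f₂) t x y := by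
  have hdiff : ∀ {v : ℝ → ℝ → ℝ → ℝ} {n : WithTop ℕ∞}, ContDiff ℝ n (uncurry3 v) → 1 ≤ n →
      DifferentiableAt ℝ (uncurry3 v) (t, x, y) :=
    fun hv hn => (hv.of_le hn).differentiable one_ne_zero _
  have hux := contDiff_Dx (m := 2) hu le_rfl
  have huy := contDiff_Dy (m := 2) hu le_rfl
  have u_x := hasDerivAt_Dx (hdiff hu (by norm_num))
  have ux_x := hasDerivAt_Dx (hdiff hux (by norm_num))
  have uy_x := hasDerivAt_Dx (hdiff huy (by norm_num))
  have uxx_x := hasDerivAt_Dx (hdiff (contDiff_Dx (m := 1) hux le_rfl) le_rfl)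
  have uyy_x := hasDerivAt_Dx (hdiff (contDiff_Dy (m := 1) huy le_rfl) le_rfl)
  have f₁_x := hasDerivAt_Dx (hf₁ (t, x, y))
  have u_y := hasDerivAt_Dy (hdiff hu (by norm_num))
  have ux_y := hasDerivAt_Dy (hdiff hux (by norm_num))
  have uy_y := hasDerivAt_Dy (hdiff huy (by norm_num))
  have f₂_y := hasDerivAt_Dy (hf₂ (t, x, y))
  have hΦ : Dx (fluxX b u f₁) t x y = _ :=
    ((((((u_x.const_mul 2).mul f₁_x).sub ((u_x.pow 2).const_mul b)).sub
      ((u_x.const_mul 2).mul uxx_x)).add (ux_x.pow 2)).sub ((u_x.const_mul 2).mul uyy_x)).sub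
      (uy_x.pow 2) |>.deriv
  have hΨ : Dy (fluxY u f₂) t x y = _ :=
    (((u_y.const_mul 2).mul f₂_y).add ((ux_y.const_mul 2).mul uy_y)).deriv
  rw [hΦ, hΨ, Dx_Dy_comm (hu.of_le (by norm_num))]
  ring

variable (b) in
theorem contDiff_fluxX (hu : ContDiff ℝ 3 (uncurry3 u)) (hf₁ : ContDiff ℝ 1 (uncurry3 f₁)) :
    ContDiff ℝ 1 (uncurry3 (fluxX b u f₁)) := by
  have hu1 : ContDiff ℝ 1 (uncurry3 u) := hu.of_le (by norm_num)
  have hux : ContDiff ℝ 1 (uncurry3 (Dx u)) := contDiff_Dx hu (by norm_num)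
  have huy : ContDiff ℝ 1 (uncurry3 (Dy u)) := contDiff_Dy hu (by norm_num)
  have huxx : ContDiff ℝ 1 (uncurry3 (Dx (Dx u))) := contDiff_Dx (contDiff_Dx hu le_rfl) le_rfl
  have huyy : ContDiff ℝ 1 (uncurry3 (Dy (Dy u))) := contDiff_Dy (contDiff_Dy hu le_rfl) le_rfl
  unfold uncurry3 fluxX at *
  fun_prop

theorem contDiff_fluxY (hu : ContDiff ℝ 2 (uncurry3 u)) (hf₂ : ContDiff ℝ 1 (uncurry3 f₂)) :
    ContDiff ℝ 1 (uncurry3 (fluxY u f₂)) := by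
  have hu1 : ContDiff ℝ 1 (uncurry3 u) := hu.of_le (by norm_num)
  have hux : ContDiff ℝ 1 (uncurry3 (Dx u)) := contDiff_Dx hu le_rfl
  have huy : ContDiff ℝ 1 (uncurry3 (Dy u)) := contDiff_Dy hu le_rfl
  unfold uncurry3 fluxY at *
  fun_prop

theorem VanishesOffSlab.fluxX (h : VanishesOffSlab R u) : VanishesOffSlab R (fluxX b u f₁) := by
  intro t x y hx
  simp [_root_.fluxX, h t x y hx, h.Dx t x y hx, h.Dy t x y hx]

theorem VanishesOffSlab.fluxY (h : VanishesOffSlab R u) : VanishesOffSlab R (fluxY u f₂) := by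
  intro t x y hx
  simp [_root_.fluxY, h t x y hx, h.Dx t x y hx]

theorem fluxY_eq_zero_of_forall {t y : ℝ} (h : ∀ x, u t x y = 0) (x : ℝ) :
    fluxY u f₂ t x y = 0 := by
  simp [fluxY, h x, Dx_eq_zero_of_forall h x]

end Fluxes

theorem lt_abs_of_notMem_Icc {x R : ℝ} (hx : x ∉ Icc (-R) R) : R < |x| :=
  not_le.1 fun h => hx (abs_le.1 h)

theorem Continuous.integrable_of_forall_lt_abs {g : ℝ → ℝ} {R : ℝ} (hg : Continuous g)
    (hR : ∀ x, R < |x| → g x = 0) : Integrable g :=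
  hg.integrable_of_hasCompactSupport <|
    HasCompactSupport.intro isCompact_Icc fun x hx => hR x (lt_abs_of_notMem_Icc hx)

abbrev stripMeasure (L : ℝ) : Measure (ℝ × ℝ) := volume.prod (volume.restrict (Ioo 0 L))

def stripIntegral (L : ℝ) (g : ℝ → ℝ → ℝ) : ℝ := ∫ x, ∫ y in Ioo 0 L, g x y

section StripIntegral

variable {L R : ℝ}

theorem stripMeasure_eq : stripMeasure L = volume.restrict (univ ×ˢ Ioo 0 L) := by
  rw [stripMeasure, Measure.volume_eq_prod, ← Measure.prod_restrict, Measure.restrict_univ]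

theorem integrable_stripMeasure {g : ℝ → ℝ → ℝ → ℝ} (hg : Continuous (uncurry3 g))
    (hR : VanishesOffSlab R g) (t : ℝ) : Integrable (Function.uncurry (g t)) (stripMeasure L) := by
  have hgt : Continuous (Function.uncurry (g t)) :=
    hg.comp (continuous_const.prodMk continuous_id)
  rw [stripMeasure_eq]
  refine (hgt.continuousOn.integrableOn_compact ((isCompact_Icc (a := -R) (b := R)).prod
    (isCompact_Icc (a := 0) (b := L)))).of_forall_sdiff_eq_zero
    (MeasurableSet.univ.prod measurableSet_Ioo) ?_
  rintro ⟨x, y⟩ ⟨⟨-, hy⟩, hxy⟩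
  exact hR t x y (lt_abs_of_notMem_Icc fun hx => hxy ⟨hx, Ioo_subset_Icc_self hy⟩)

theorem integrable_uIoc_prod_stripMeasure {g : ℝ → ℝ → ℝ → ℝ} (hg : Continuous (uncurry3 g))
    (hR : VanishesOffSlab R g) (a b : ℝ) :
    Integrable (Function.uncurry fun τ (p : ℝ × ℝ) => g τ p.1 p.2)
      ((volume.restrict (uIoc a b)).prod (stripMeasure L)) := by
  rw [stripMeasure_eq, Measure.prod_restrict]
  refine (hg.continuousOn.integrableOn_compact ((isCompact_uIcc (a := a) (b := b)).prod
    ((isCompact_Icc (a := -R) (b := R)).prod (isCompact_Icc (a := 0) (b := L)))))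
    |>.of_forall_sdiff_eq_zero
      (measurableSet_uIoc.prod (MeasurableSet.univ.prod measurableSet_Ioo)) ?_
  rintro ⟨τ, x, y⟩ ⟨⟨hτ, -, hy⟩, hmem⟩
  exact hR τ x y
    (lt_abs_of_notMem_Icc fun hx => hmem ⟨uIoc_subset_uIcc hτ, hx, Ioo_subset_Icc_self hy⟩)

theorem stripIntegral_eq_integral {g : ℝ → ℝ → ℝ}
    (hg : Integrable (Function.uncurry g) (stripMeasure L)) :
    stripIntegral L g = ∫ p, Function.uncurry g p ∂stripMeasure L :=
  (integral_prod _ hg).symm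

theorem stripIntegral_congr {g h : ℝ → ℝ → ℝ} (hgh : ∀ x, ∀ y ∈ Ioo 0 L, g x y = h x y) :
    stripIntegral L g = stripIntegral L h :=
  integral_congr_ae <| Filter.Eventually.of_forall fun x =>
    setIntegral_congr_fun measurableSet_Ioo (hgh x)

theorem stripIntegral_add {g h : ℝ → ℝ → ℝ}
    (hg : Integrable (Function.uncurry g) (stripMeasure L))
    (hh : Integrable (Function.uncurry h) (stripMeasure L)) :
    stripIntegral L (fun x y => g x y + h x y) = stripIntegral L g + stripIntegral L h := by
  rw [stripIntegral_eq_integral hg, stripIntegral_eq_integral hh, ← integral_add hg hh,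
    stripIntegral_eq_integral (g := fun x y => g x y + h x y) (hg.add hh)]
  rfl

theorem stripIntegral_const_mul (c : ℝ) (g : ℝ → ℝ → ℝ) :
    stripIntegral L (fun x y => c * g x y) = c * stripIntegral L g := by
  simp only [stripIntegral, integral_const_mul]

theorem stripIntegral_Dx_eq_zero {Φ : ℝ → ℝ → ℝ → ℝ} (hΦ : ContDiff ℝ 1 (uncurry3 Φ))
    (hR : VanishesOffSlab R Φ) (t : ℝ) : stripIntegral L (Dx Φ t) = 0 := by
  have hc : Continuous (uncurry3 (Dx Φ)) := (contDiff_Dx (m := 0) hΦ (by norm_num)).continuous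
  have hx : ∀ y, ∫ x, Dx Φ t x y = 0 := fun y => by
    have hline : Continuous fun x : ℝ => (t, x, y) := by fun_prop
    exact integral_eq_zero_of_hasDerivAt_of_integrable
      (fun x => hasDerivAt_Dx (hΦ.differentiable one_ne_zero _))
      ((hc.comp hline).integrable_of_forall_lt_abs fun x => hR.Dx t x y)
      ((hΦ.continuous.comp hline).integrable_of_forall_lt_abs fun x => hR t x y)
  rw [stripIntegral, integral_integral_swap (integrable_stripMeasure hc hR.Dx t)]
  simp [hx]

theorem stripIntegral_Dy_eq_zero {Ψ : ℝ → ℝ → ℝ → ℝ} {t : ℝ} (hL : 0 ≤ L)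
    (hΨ : ContDiff ℝ 1 (uncurry3 Ψ)) (h0 : ∀ x, Ψ t x 0 = 0) (hL' : ∀ x, Ψ t x L = 0) :
    stripIntegral L (Dy Ψ t) = 0 := by
  have hc : Continuous (uncurry3 (Dy Ψ)) := (contDiff_Dy (m := 0) hΨ (by norm_num)).continuous
  have hy : ∀ x, ∫ y in Ioo 0 L, Dy Ψ t x y = 0 := fun x => by
    rw [← integral_Ioc_eq_integral_Ioo, ← intervalIntegral.integral_of_le hL,
      intervalIntegral.integral_eq_sub_of_hasDerivAt
        (fun y _ => hasDerivAt_Dy (hΨ.differentiable one_ne_zero _))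
        ((hc.comp (by fun_prop : Continuous fun y : ℝ => (t, x, y))).intervalIntegrable 0 L),
      h0, hL', sub_zero]
  simp [stripIntegral, hy]

theorem stripIntegral_sq_eq_add_integral {u : ℝ → ℝ → ℝ → ℝ}
    (hu : ContDiff ℝ 1 (uncurry3 u)) (hR : VanishesOffSlab R u) (a b : ℝ) :
    stripIntegral L (fun x y => u b x y ^ 2) = stripIntegral L (fun x y => u a x y ^ 2)
      + ∫ τ in a..b, stripIntegral L (fun x y => 2 * u τ x y * Dt u τ x y) := by
  set e : ℝ → ℝ → ℝ → ℝ := fun τ x y => 2 * u τ x y * Dt u τ x y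
  have hu_t : Continuous (uncurry3 (Dt u)) := (contDiff_Dt (m := 0) hu (by norm_num)).continuous
  have he : Continuous (uncurry3 e) := by
    have := hu.continuous
    unfold uncurry3 at *
    fun_prop
  have heR : VanishesOffSlab R e := fun τ x y hx => by simp [e, hR τ x y hx]
  have hsq : Continuous (uncurry3 fun τ x y => u τ x y ^ 2) := hu.continuous.pow 2
  have hsqR : VanishesOffSlab R fun τ x y => u τ x y ^ 2 := fun τ x y hx => by
    simp [hR τ x y hx]
  have hftc : ∀ x y, ∫ τ in a..b, e τ x y = u b x y ^ 2 - u a x y ^ 2 := fun x y => by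
    have hderiv : ∀ τ, HasDerivAt (fun s => u s x y ^ 2) (e τ x y) τ := fun τ =>
      ((hasDerivAt_Dt (hu.differentiable one_ne_zero (τ, x, y))).fun_pow 2).congr_deriv
        (by simp only [e]; ring)
    exact intervalIntegral.integral_eq_sub_of_hasDerivAt (fun τ _ => hderiv τ)
      ((he.comp (by fun_prop : Continuous fun τ : ℝ => (τ, x, y))).intervalIntegrable a b)
  suffices ∫ τ in a..b, stripIntegral L (e τ) = stripIntegral L (fun x y => u b x y ^ 2)
      - stripIntegral L (fun x y => u a x y ^ 2) by linarith
  calc ∫ τ in a..b, stripIntegral L (e τ)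
      = ∫ τ in a..b, (∫ p, e τ p.1 p.2 ∂stripMeasure L) :=
        intervalIntegral.integral_congr fun τ _ =>
          stripIntegral_eq_integral (integrable_stripMeasure he heR τ)
    _ = ∫ p, (∫ τ in a..b, e τ p.1 p.2) ∂stripMeasure L :=
        intervalIntegral_integral_swap (integrable_uIoc_prod_stripMeasure he heR a b)
    _ = ∫ p, (u b p.1 p.2 ^ 2 - u a p.1 p.2 ^ 2) ∂stripMeasure L := by simp only [hftc]
    _ = _ := by
        rw [stripIntegral_eq_integral (integrable_stripMeasure hsq hsqR b),
          stripIntegral_eq_integral (integrable_stripMeasure hsq hsqR a),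
          ← integral_sub (integrable_stripMeasure hsq hsqR b)
            (integrable_stripMeasure hsq hsqR a)]
        rfl

end StripIntegral

theorem stripIntegral_energy_balance {L R b t : ℝ} {u f₀ f₁ f₂ : ℝ → ℝ → ℝ → ℝ} (hL : 0 ≤ L)
    (hu : ContDiff ℝ 3 (uncurry3 u)) (hR : VanishesOffSlab R u)
    (hbc0 : ∀ x, u t x 0 = 0) (hbcL : ∀ x, u t x L = 0) (hf₀ : Continuous (uncurry3 f₀))
    (hf₁ : ContDiff ℝ 1 (uncurry3 f₁)) (hf₂ : ContDiff ℝ 1 (uncurry3 f₂))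
    (heq : ∀ x, ∀ y ∈ Icc 0 L,
      Dt u t x y + b * Dx u t x y + Dx (Dx (Dx u)) t x y + Dx (Dy (Dy u)) t x y
        = f₀ t x y + Dx f₁ t x y + Dy f₂ t x y) :
    stripIntegral L (fun x y => 2 * u t x y * Dt u t x y)
      = 2 * stripIntegral L
        (fun x y => f₀ t x y * u t x y - f₁ t x y * Dx u t x y - f₂ t x y * Dy u t x y) := by
  set F : ℝ → ℝ → ℝ → ℝ := fun t x y =>
    f₀ t x y * u t x y - f₁ t x y * Dx u t x y - f₂ t x y * Dy u t x y
  have hF : Continuous (uncurry3 F) := by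
    have := hu.continuous
    have := hf₁.continuous
    have := hf₂.continuous
    have := (contDiff_Dx (m := 0) hu (by norm_num)).continuous
    have := (contDiff_Dy (m := 0) hu (by norm_num)).continuous
    unfold uncurry3 at *
    fun_prop
  have hFR : VanishesOffSlab R F := fun t x y hx => by
    simp [F, hR t x y hx, hR.Dx t x y hx, hR.Dy t x y hx]
  have hΦ := contDiff_fluxX b hu hf₁
  have hΨ := contDiff_fluxY (hu.of_le (by norm_num)) hf₂
  calc stripIntegral L (fun x y => 2 * u t x y * Dt u t x y)
      = stripIntegral L (fun x y =>
          (2 * F t x y + Dx (fluxX b u f₁) t x y) + Dy (fluxY u f₂) t x y) :=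
        stripIntegral_congr fun x y hy => by
          have := energy_density_identity (b := b) (f₀ := f₀) hu (hf₁.differentiable one_ne_zero)
            (hf₂.differentiable one_ne_zero) t x y
          rw [heq x y (Ioo_subset_Icc_self hy), sub_self, mul_zero] at this
          linarith
    _ = 2 * stripIntegral L (F t) + stripIntegral L (Dx (fluxX b u f₁) t)
          + stripIntegral L (Dy (fluxY u f₂) t) := by
        have iF := (integrable_stripMeasure (L := L) hF hFR t).const_mul 2
        have iΦ := integrable_stripMeasure (L := L)
          (contDiff_Dx (m := 0) hΦ (by norm_num)).continuous hR.fluxX.Dx t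
        have iΨ := integrable_stripMeasure (L := L)
          (contDiff_Dy (m := 0) hΨ (by norm_num)).continuous hR.fluxY.Dy t
        rw [stripIntegral_add _ iΨ, stripIntegral_add _ iΦ, stripIntegral_const_mul]
        exacts [iF, iF.add iΦ]
    _ = 2 * stripIntegral L (F t) := by
        rw [stripIntegral_Dx_eq_zero hΦ hR.fluxX, stripIntegral_Dy_eq_zero hL hΨ
          (fluxY_eq_zero_of_forall hbc0) (fluxY_eq_zero_of_forall hbcL)]
        ring

theorem L2_energy_identity_general (L T b : ℝ) (hL : 0 < L)
    (u f₀ f₁ f₂ : ℝ → ℝ → ℝ → ℝ)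
    (hu : ContDiff ℝ (⊤ : ℕ∞) (fun p : ℝ × ℝ × ℝ => u p.1 p.2.1 p.2.2))
    (hsupp : ∃ R > 0, ∀ t x y : ℝ, R ≤ |x| → u t x y = 0)
    (hbc0 : ∀ t x : ℝ, u t x 0 = 0) (hbcL : ∀ t x : ℝ, u t x L = 0)
    (hf₀ : ContDiff ℝ 1 (fun p : ℝ × ℝ × ℝ => f₀ p.1 p.2.1 p.2.2))
    (hf₁ : ContDiff ℝ 1 (fun p : ℝ × ℝ × ℝ => f₁ p.1 p.2.1 p.2.2))
    (hf₂ : ContDiff ℝ 1 (fun p : ℝ × ℝ × ℝ => f₂ p.1 p.2.1 p.2.2))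
    (heq : ∀ t ∈ Icc (0:ℝ) T, ∀ x : ℝ, ∀ y ∈ Icc (0:ℝ) L,
      Dt u t x y + b * Dx u t x y + Dx (Dx (Dx u)) t x y + Dx (Dy (Dy u)) t x y
        = f₀ t x y + Dx f₁ t x y + Dy f₂ t x y) :
    ∀ t ∈ Icc (0:ℝ) T,
      (∫ x : ℝ, ∫ y in Ioo (0:ℝ) L, (u t x y) ^ 2)
        = (∫ x : ℝ, ∫ y in Ioo (0:ℝ) L, (u 0 x y) ^ 2)
          + 2 * ∫ τ in (0:ℝ)..t, ∫ x : ℝ, ∫ y in Ioo (0:ℝ) L,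
              (f₀ τ x y * u τ x y - f₁ τ x y * Dx u τ x y - f₂ τ x y * Dy u τ x y) := by
  obtain ⟨R, -, hR⟩ := hsupp
  have hR' : VanishesOffSlab R u := fun t x y hx => hR t x y hx.le
  have hu3 : ContDiff ℝ 3 (uncurry3 u) := hu.of_le (by norm_cast)
  intro t ht
  have hbalance : ∀ τ ∈ uIcc 0 t,
      stripIntegral L (fun x y => 2 * u τ x y * Dt u τ x y) = 2 * stripIntegral L
        (fun x y => f₀ τ x y * u τ x y - f₁ τ x y * Dx u τ x y - f₂ τ x y * Dy u τ x y) := by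
    intro τ hτ
    rw [uIcc_of_le ht.1] at hτ
    exact stripIntegral_energy_balance hL.le hu3 hR' (hbc0 τ) (hbcL τ) hf₀.continuous hf₁ hf₂
      (heq τ ⟨hτ.1, hτ.2.trans ht.2⟩)
  calc stripIntegral L (fun x y => u t x y ^ 2)
      = stripIntegral L (fun x y => u 0 x y ^ 2)
        + ∫ τ in (0:ℝ)..t, stripIntegral L (fun x y => 2 * u τ x y * Dt u τ x y) :=
        stripIntegral_sq_eq_add_integral (hu3.of_le (by norm_num)) hR' 0 t
    _ = _ := by
        rw [intervalIntegral.integral_congr hbalance, intervalIntegral.integral_const_mul]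
        rfl

/-- Energy identity in `L²` for smooth solutions of the linearized
Zakharov–Kuznetsov equation `u_t + b u_x + u_xxx + u_xyy = f₀ + f₁ₓ + f₂_y`
on the strip with homogeneous Dirichlet boundary conditions. -/
theorem L2_energy_identity (L T b : ℝ) (hL : 0 < L) (hT : 0 < T)
    (u f₀ f₁ f₂ : ℝ → ℝ → ℝ → ℝ)
    (hu : ContDiff ℝ (⊤ : ℕ∞) (fun p : ℝ × ℝ × ℝ => u p.1 p.2.1 p.2.2))
    (hsupp : ∃ R > 0, ∀ t x y : ℝ, R ≤ |x| → u t x y = 0)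
    (hbc0 : ∀ t x : ℝ, u t x 0 = 0) (hbcL : ∀ t x : ℝ, u t x L = 0)
    (hf₀ : ContDiff ℝ 1 (fun p : ℝ × ℝ × ℝ => f₀ p.1 p.2.1 p.2.2))
    (hf₁ : ContDiff ℝ 1 (fun p : ℝ × ℝ × ℝ => f₁ p.1 p.2.1 p.2.2))
    (hf₂ : ContDiff ℝ 1 (fun p : ℝ × ℝ × ℝ => f₂ p.1 p.2.1 p.2.2))
    (heq : ∀ t ∈ Icc (0:ℝ) T, ∀ x : ℝ, ∀ y ∈ Icc (0:ℝ) L,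
      Dt u t x y + b * Dx u t x y + Dx (Dx (Dx u)) t x y + Dx (Dy (Dy u)) t x y
        = f₀ t x y + Dx f₁ t x y + Dy f₂ t x y) :
    ∀ t ∈ Icc (0:ℝ) T,
      (∫ x : ℝ, ∫ y in Ioo (0:ℝ) L, (u t x y) ^ 2)
        = (∫ x : ℝ, ∫ y in Ioo (0:ℝ) L, (u 0 x y) ^ 2)
          + 2 * ∫ τ in (0:ℝ)..t, ∫ x : ℝ, ∫ y in Ioo (0:ℝ) L,
              (f₀ τ x y * u τ x y - f₁ τ x y * Dx u τ x y - f₂ τ x y * Dy u τ x y) :=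
  L2_energy_identity_general L T b hL u f₀ f₁ f₂ hu hsupp hbc0 hbcL hf₀ hf₁ hf₂ heq
end
end

section
/- Let ψ be an admissible weight function. Then there exists a constant c > 0, depending only on the constants in the admissibility bounds for ψ (in particular independent of L and of φ), such that for every L > 0 and every test function φ on the strip Σ: ∬_Σ φ⁴ ψ(x)² dx dy ≤ c ( ∬_Σ ( |Dφ|² + φ² ) ψ(x) dx dy )². -/
open MeasureTheory Real Set

noncomputable section

/-- Partial derivative in `x`. -/
def px (φ : ℝ → ℝ → ℝ) (x y : ℝ) : ℝ := deriv (fun t => φ t y) x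

/-- Partial derivative in `y`. -/
def py (φ : ℝ → ℝ → ℝ) (x y : ℝ) : ℝ := deriv (fun t => φ x t) y

/-- A test function on the strip `ℝ × (0, L)`. -/
structure IsTestFun (L : ℝ) (φ : ℝ → ℝ → ℝ) : Prop where
  smooth : ContDiff ℝ (⊤ : ℕ∞) (fun p : ℝ × ℝ => φ p.1 p.2)
  supp : ∃ R > 0, ∀ x y : ℝ, R ≤ |x| → φ x y = 0
  bc0 : ∀ x : ℝ, φ x 0 = 0
  bcL : ∀ x : ℝ, φ x L = 0

/-- An admissible weight function. -/
structure Admissible (ψ : ℝ → ℝ) : Prop where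
  smooth : ContDiff ℝ (⊤ : ℕ∞) ψ
  pos : ∀ x : ℝ, 0 < ψ x
  bound : ∀ j : ℕ, 1 ≤ j → ∃ c : ℝ, ∀ x : ℝ, |iteratedDeriv j ψ x| ≤ c * ψ x

/-! Ladyzhenskaya's argument. Integrating `∂ₓ(φ²ψ)` along a horizontal line and using
`|ψ'| ≤ cψ` bounds `φ²ψ` at `(x, y)` by `(1 + c) ∫ (|Dφ|² + φ²) ψ dx`, a function of `y`
alone; integrating `∂_y φ²` from the boundary `y = 0` bounds it by `∫₀ᴸ (|Dφ|² + φ²) ψ dy`,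
a function of `x` alone. Multiplying the two bounds and integrating over the strip, Fubini
turns the product of the two marginals into the square of the energy, with the constant
`1 + c` independent of `L`. -/

theorem integral_integral_sq_le_of_le_marginals {α β : Type*} [MeasurableSpace α]
    [MeasurableSpace β] {μ : Measure α} {ν : Measure β} [SFinite μ] [SFinite ν]
    {u k : α → β → ℝ} {C : ℝ} (hk : Integrable (Function.uncurry k) (μ.prod ν))
    (hu : ∀ x y, 0 ≤ u x y) (hu_fst : ∀ x, ∀ᵐ y ∂ν, u x y ≤ C * ∫ x', k x' y ∂μ)
    (hu_snd : ∀ x, ∀ᵐ y ∂ν, u x y ≤ ∫ y', k x y' ∂ν) :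
    ∫ x, ∫ y, u x y ^ 2 ∂ν ∂μ ≤ C * (∫ x, ∫ y, k x y ∂ν ∂μ) ^ 2 := by
  set E := ∫ x, ∫ y, k x y ∂ν ∂μ
  have hinner (x : α) : ∫ y, u x y ^ 2 ∂ν ≤ C * E * ∫ y', k x y' ∂ν := by
    calc ∫ y, u x y ^ 2 ∂ν ≤ ∫ y, (C * ∫ x', k x' y ∂μ) * ∫ y', k x y' ∂ν ∂ν := by
          refine integral_mono_of_nonneg (ae_of_all _ fun y => sq_nonneg _)
            ((hk.integral_prod_right.const_mul C).mul_const _) ?_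
          filter_upwards [hu_fst x, hu_snd x] with y h_fst h_snd
          rw [sq]
          exact mul_le_mul h_fst h_snd (hu x y) ((hu x y).trans h_fst)
      _ = C * E * ∫ y', k x y' ∂ν := by
          rw [integral_mul_const, integral_const_mul, ← integral_integral_swap hk]
  calc ∫ x, ∫ y, u x y ^ 2 ∂ν ∂μ ≤ ∫ x, C * E * ∫ y', k x y' ∂ν ∂μ :=
        integral_mono_of_nonneg (ae_of_all _ fun x => integral_nonneg fun y => sq_nonneg _)
          (hk.integral_prod_left.const_mul _) (ae_of_all _ hinner)
    _ = C * E ^ 2 := by rw [integral_const_mul]; ring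

theorem sq_mul_le_mul_setIntegral_of_eq_zero {g g' w w' : ℝ → ℝ} {a y c : ℝ}
    (hg : ∀ t, HasDerivAt g (g' t) t) (hw : ∀ t, HasDerivAt w (w' t) t)
    (hg' : Continuous g') (hw' : Continuous w') (hw0 : ∀ t, 0 ≤ w t) (hc : 0 ≤ c)
    (hww' : ∀ t, |w' t| ≤ c * w t) (hga : g a = 0) (hay : a ≤ y) :
    g y ^ 2 * w y ≤ (1 + c) * ∫ t in Ioc a y, (g' t ^ 2 + g t ^ 2) * w t := by
  have hgc : Continuous g := continuous_iff_continuousAt.2 fun t => (hg t).continuousAt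
  have hwc : Continuous w := continuous_iff_continuousAt.2 fun t => (hw t).continuousAt
  have hderiv (t : ℝ) : HasDerivAt (fun t => g t ^ 2 * w t)
      (2 * g t * g' t * w t + g t ^ 2 * w' t) t :=
    (((hg t).fun_pow 2).mul (hw t)).congr_deriv (by push_cast; ring)
  -- `2 g g' ≤ g'² + g²` and `g² w' ≤ c g² w`.
  have hpointwise (t : ℝ) : 2 * g t * g' t * w t + g t ^ 2 * w' t
      ≤ (1 + c) * ((g' t ^ 2 + g t ^ 2) * w t) := by
    nlinarith [mul_nonneg (sq_nonneg (g t - g' t)) (hw0 t),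
      mul_le_mul_of_nonneg_left (abs_le.1 (hww' t)).2 (sq_nonneg (g t)),
      mul_nonneg (mul_nonneg hc (sq_nonneg (g' t))) (hw0 t)]
  have hderiv_int : IntervalIntegrable (fun t => 2 * g t * g' t * w t + g t ^ 2 * w' t)
      volume a y := by
    apply Continuous.intervalIntegrable
    fun_prop
  have hbound_int : IntervalIntegrable (fun t => (1 + c) * ((g' t ^ 2 + g t ^ 2) * w t))
      volume a y := by
    apply Continuous.intervalIntegrable
    fun_prop
  calc g y ^ 2 * w y = ∫ t in a..y, (2 * g t * g' t * w t + g t ^ 2 * w' t) := by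
        rw [intervalIntegral.integral_eq_sub_of_hasDerivAt (fun t _ => hderiv t) hderiv_int, hga]
        ring
    _ ≤ ∫ t in a..y, (1 + c) * ((g' t ^ 2 + g t ^ 2) * w t) :=
        intervalIntegral.integral_mono_on hay hderiv_int hbound_int fun t _ => hpointwise t
    _ = (1 + c) * ∫ t in Ioc a y, (g' t ^ 2 + g t ^ 2) * w t := by
        rw [intervalIntegral.integral_const_mul, intervalIntegral.integral_of_le hay]

theorem Continuous.integrable_of_eq_zero_of_lt_abs {f : ℝ → ℝ} (hf : Continuous f) {R : ℝ}
    (hR : ∀ x, R < |x| → f x = 0) : Integrable f :=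
  hf.integrable_of_hasCompactSupport <| HasCompactSupport.intro isCompact_Icc fun x hx =>
    hR x <| not_le.1 fun h => hx (abs_le.1 h)

theorem integrable_prod_restrict_Ioo_of_eq_zero_of_lt_abs {f : ℝ → ℝ → ℝ}
    (hf : Continuous (Function.uncurry f)) {R : ℝ} (hR : ∀ x y, R < |x| → f x y = 0)
    (a b : ℝ) : Integrable (Function.uncurry f) (volume.prod (volume.restrict (Ioo a b))) := by
  have hstrip : (volume : Measure ℝ).prod (volume.restrict (Ioo a b))
      = volume.restrict (univ ×ˢ Ioo a b) := by
    rw [Measure.volume_eq_prod, ← Measure.prod_restrict, Measure.restrict_univ]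
  rw [hstrip]
  have hbox : IntegrableOn (Function.uncurry f) (Icc (-R) R ×ˢ Icc a b) :=
    hf.continuousOn.integrableOn_compact (isCompact_Icc.prod isCompact_Icc)
  refine hbox.of_forall_sdiff_eq_zero (MeasurableSet.univ.prod measurableSet_Ioo)
    fun p ⟨⟨_, hp₂⟩, hp⟩ => hR p.1 p.2 ?_
  exact not_le.1 fun h => hp ⟨abs_le.1 h, Ioo_subset_Icc_self hp₂⟩

section PartialDerivatives

variable {φ : ℝ → ℝ → ℝ}

theorem contDiff_uncurry_flip {n : WithTop ℕ∞}
    (hφ : ContDiff ℝ n fun p : ℝ × ℝ => φ p.1 p.2) :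
    ContDiff ℝ n fun p : ℝ × ℝ => flip φ p.1 p.2 :=
  hφ.comp (contDiff_snd.prodMk contDiff_fst)

theorem hasDerivAt_fderiv_apply_one_zero (hφ : ContDiff ℝ 1 fun p : ℝ × ℝ => φ p.1 p.2)
    (x y : ℝ) :
    HasDerivAt (fun t => φ t y) (fderiv ℝ (fun p : ℝ × ℝ => φ p.1 p.2) (x, y) (1, 0)) x :=
  (hφ.differentiable one_ne_zero (x, y)).hasFDerivAt.comp_hasDerivAt (f := fun t => (t, y)) x
    ((hasDerivAt_id x).prodMk (hasDerivAt_const x y))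

theorem px_eq_fderiv (hφ : ContDiff ℝ 1 fun p : ℝ × ℝ => φ p.1 p.2) (x y : ℝ) :
    px φ x y = fderiv ℝ (fun p : ℝ × ℝ => φ p.1 p.2) (x, y) (1, 0) :=
  (hasDerivAt_fderiv_apply_one_zero hφ x y).deriv

theorem hasDerivAt_px (hφ : ContDiff ℝ 1 fun p : ℝ × ℝ => φ p.1 p.2) (x y : ℝ) :
    HasDerivAt (fun t => φ t y) (px φ x y) x :=
  (hasDerivAt_fderiv_apply_one_zero hφ x y).differentiableAt.hasDerivAt

-- `py φ x y` is definitionally `px (flip φ) y x`.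
theorem hasDerivAt_py (hφ : ContDiff ℝ 1 fun p : ℝ × ℝ => φ p.1 p.2) (x y : ℝ) :
    HasDerivAt (fun t => φ x t) (py φ x y) y :=
  hasDerivAt_px (contDiff_uncurry_flip hφ) y x

theorem continuous_px (hφ : ContDiff ℝ 1 fun p : ℝ × ℝ => φ p.1 p.2) :
    Continuous fun p : ℝ × ℝ => px φ p.1 p.2 := by
  simp_rw [px_eq_fderiv hφ]
  exact (hφ.continuous_fderiv one_ne_zero).clm_apply continuous_const

theorem continuous_py (hφ : ContDiff ℝ 1 fun p : ℝ × ℝ => φ p.1 p.2) :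
    Continuous fun p : ℝ × ℝ => py φ p.1 p.2 :=
  (continuous_px (contDiff_uncurry_flip hφ)).comp continuous_swap

theorem px_eq_zero_of_lt_abs {R : ℝ} (hR : ∀ x y, R ≤ |x| → φ x y = 0) {x : ℝ}
    (hx : R < |x|) (y : ℝ) : px φ x y = 0 := by
  have hzero : (fun t => φ t y) =ᶠ[nhds x] fun _ => 0 := by
    filter_upwards [(isOpen_lt continuous_const continuous_abs).mem_nhds hx] with t ht
    exact hR t y ht.le
  rw [px, hzero.deriv_eq, deriv_const]

theorem py_eq_zero_of_le_abs {R : ℝ} (hR : ∀ x y, R ≤ |x| → φ x y = 0) {x : ℝ}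
    (hx : R ≤ |x|) (y : ℝ) : py φ x y = 0 := by
  rw [py, show (fun t => φ x t) = fun _ => 0 from funext fun t => hR x t hx, deriv_const]

end PartialDerivatives

def energyDensity (ψ : ℝ → ℝ) (φ : ℝ → ℝ → ℝ) (x y : ℝ) : ℝ :=
  (px φ x y ^ 2 + py φ x y ^ 2 + φ x y ^ 2) * ψ x

section EnergyDensity

variable {ψ : ℝ → ℝ} {φ : ℝ → ℝ → ℝ}

theorem energyDensity_nonneg {x : ℝ} (hψx : 0 ≤ ψ x) (y : ℝ) : 0 ≤ energyDensity ψ φ x y :=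
  mul_nonneg (by positivity) hψx

theorem continuous_energyDensity (hψ : Continuous ψ)
    (hφ : ContDiff ℝ 1 fun p : ℝ × ℝ => φ p.1 p.2) :
    Continuous (Function.uncurry (energyDensity ψ φ)) :=
  ((((continuous_px hφ).pow 2).add ((continuous_py hφ).pow 2)).add (hφ.continuous.pow 2)).mul
    (hψ.comp continuous_fst)

theorem energyDensity_eq_zero_of_lt_abs {R : ℝ} (hR : ∀ x y, R ≤ |x| → φ x y = 0) {x : ℝ}
    (hx : R < |x|) (y : ℝ) : energyDensity ψ φ x y = 0 := by
  rw [energyDensity, px_eq_zero_of_lt_abs hR hx, py_eq_zero_of_le_abs hR hx.le,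
    hR x y hx.le]
  ring

theorem sq_mul_le_mul_integral_energyDensity (hφ : ContDiff ℝ 1 fun p : ℝ × ℝ => φ p.1 p.2)
    {R : ℝ} (hR : ∀ x y, R ≤ |x| → φ x y = 0) (hψ : ContDiff ℝ 1 ψ) (hψ0 : ∀ x, 0 ≤ ψ x)
    {c : ℝ} (hc : 0 ≤ c) (hψ' : ∀ x, |deriv ψ x| ≤ c * ψ x) (x y : ℝ) :
    φ x y ^ 2 * ψ x ≤ (1 + c) * ∫ t, energyDensity ψ φ t y := by
  set a := -(|R| + |x|)
  have ha : φ a y = 0 := hR a y <| by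
    rw [abs_neg, abs_of_nonneg (by positivity)]
    linarith [le_abs_self R, abs_nonneg x]
  have hax : a ≤ x := by linarith [neg_abs_le x, abs_nonneg R]
  have hE : Continuous fun t => energyDensity ψ φ t y :=
    (continuous_energyDensity hψ.continuous hφ).comp (continuous_id.prodMk continuous_const)
  have hE_int : Integrable fun t => energyDensity ψ φ t y :=
    hE.integrable_of_eq_zero_of_lt_abs fun t ht => energyDensity_eq_zero_of_lt_abs hR ht y
  have hpx : Continuous fun t => px φ t y :=
    (continuous_px hφ).comp (continuous_id.prodMk continuous_const)
  calc φ x y ^ 2 * ψ x ≤ (1 + c) * ∫ t in Ioc a x, (px φ t y ^ 2 + φ t y ^ 2) * ψ t :=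
        sq_mul_le_mul_setIntegral_of_eq_zero (fun t => hasDerivAt_px hφ t y)
          (fun t => (hψ.differentiable one_ne_zero t).hasDerivAt) hpx
          (hψ.continuous_deriv le_rfl) hψ0 hc hψ' ha hax
    _ ≤ (1 + c) * ∫ t in Ioc a x, energyDensity ψ φ t y := by
        refine mul_le_mul_of_nonneg_left (setIntegral_mono_on ?_ hE_int.integrableOn
          measurableSet_Ioc fun t _ => ?_) (by linarith)
        · exact Continuous.integrableOn_Ioc (by fun_prop)
        · exact mul_le_mul_of_nonneg_right (by nlinarith [sq_nonneg (py φ t y)]) (hψ0 t)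
    _ ≤ (1 + c) * ∫ t, energyDensity ψ φ t y :=
        mul_le_mul_of_nonneg_left (setIntegral_le_integral hE_int
          (ae_of_all _ fun t => energyDensity_nonneg (hψ0 t) y)) (by linarith)

theorem sq_mul_le_setIntegral_energyDensity (hφ : ContDiff ℝ 1 fun p : ℝ × ℝ => φ p.1 p.2)
    (hφ0 : ∀ x, φ x 0 = 0) {x : ℝ} (hψx : 0 ≤ ψ x) {L y : ℝ} (hy : y ∈ Ioo 0 L) :
    φ x y ^ 2 * ψ x ≤ ∫ s in Ioo 0 L, energyDensity ψ φ x s := by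
  have hpy : Continuous fun s => py φ x s :=
    (continuous_py hφ).comp (continuous_const.prodMk continuous_id)
  have hpx : Continuous fun s => px φ x s :=
    (continuous_px hφ).comp (continuous_const.prodMk continuous_id)
  have hφx : Continuous fun s => φ x s :=
    hφ.continuous.comp (continuous_const.prodMk continuous_id)
  have hE : Continuous fun s => energyDensity ψ φ x s := by
    unfold energyDensity
    fun_prop
  calc φ x y ^ 2 * ψ x ≤ (1 + 0) * ∫ s in Ioc 0 y, (py φ x s ^ 2 + φ x s ^ 2) * ψ x :=
        sq_mul_le_mul_setIntegral_of_eq_zero (hasDerivAt_py hφ x) (fun s => hasDerivAt_const s _)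
          hpy continuous_const (fun _ => hψx) le_rfl (fun _ => by simp) (hφ0 x) hy.1.le
    _ ≤ ∫ s in Ioc 0 y, energyDensity ψ φ x s := by
        rw [add_zero, one_mul]
        refine setIntegral_mono_on (Continuous.integrableOn_Ioc (by fun_prop))
          hE.integrableOn_Ioc measurableSet_Ioc fun s _ => ?_
        exact mul_le_mul_of_nonneg_right (by nlinarith [sq_nonneg (px φ x s)]) hψx
    _ ≤ ∫ s in Ioo 0 L, energyDensity ψ φ x s :=
        setIntegral_mono_set (hE.integrableOn_Icc.mono_set Ioo_subset_Icc_self)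
          (ae_of_all _ fun s => energyDensity_nonneg hψx s)
          (Ioc_subset_Ioo_right hy.2).eventuallyLE

end EnergyDensity

theorem Admissible.exists_abs_deriv_le {ψ : ℝ → ℝ} (hψ : Admissible ψ) :
    ∃ c, 0 ≤ c ∧ ∀ x, |deriv ψ x| ≤ c * ψ x := by
  obtain ⟨c, hc⟩ := hψ.bound 1 le_rfl
  refine ⟨max c 0, le_max_right _ _, fun x => ?_⟩
  rw [← iteratedDeriv_one]
  exact (hc x).trans (mul_le_mul_of_nonneg_right (le_max_left _ _) (hψ.pos x).le)

/-- Weighted `L⁴` interpolation inequality on the strip, with constant uniform in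
the width `L`. -/
theorem weighted_L4_interpolation (ψ : ℝ → ℝ) (hψ : Admissible ψ) :
    ∃ c > 0, ∀ L : ℝ, 0 < L → ∀ φ : ℝ → ℝ → ℝ, IsTestFun L φ →
      (∫ x : ℝ, ∫ y in Ioo (0:ℝ) L, (φ x y) ^ 4 * ψ x ^ 2)
        ≤ c * (∫ x : ℝ, ∫ y in Ioo (0:ℝ) L,
            ((px φ x y) ^ 2 + (py φ x y) ^ 2 + (φ x y) ^ 2) * ψ x) ^ 2 := by
  obtain ⟨c, hc, hψ'⟩ := hψ.exists_abs_deriv_le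
  have hψ0 (x : ℝ) : 0 ≤ ψ x := (hψ.pos x).le
  have hψ1 : ContDiff ℝ 1 ψ := hψ.smooth.of_le (by exact_mod_cast le_top)
  refine ⟨1 + c, by linarith, fun L _ φ hφ => ?_⟩
  obtain ⟨R, -, hR⟩ := hφ.supp
  have hφ1 : ContDiff ℝ 1 fun p : ℝ × ℝ => φ p.1 p.2 := hφ.smooth.of_le (by exact_mod_cast le_top)
  have hE : Integrable (Function.uncurry (energyDensity ψ φ))
      (volume.prod (volume.restrict (Ioo 0 L))) :=
    integrable_prod_restrict_Ioo_of_eq_zero_of_lt_abs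
      (continuous_energyDensity hψ1.continuous hφ1)
      (fun x y hx => energyDensity_eq_zero_of_lt_abs hR hx y) 0 L
  calc (∫ x, ∫ y in Ioo 0 L, φ x y ^ 4 * ψ x ^ 2)
      = ∫ x, ∫ y in Ioo 0 L, (φ x y ^ 2 * ψ x) ^ 2 := by simp_rw [mul_pow, ← pow_mul]
    _ ≤ (1 + c) * (∫ x, ∫ y in Ioo 0 L, energyDensity ψ φ x y) ^ 2 :=
      integral_integral_sq_le_of_le_marginals hE (fun x y => mul_nonneg (sq_nonneg _) (hψ0 x))
        (fun x => ae_of_all _ fun y =>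
          sq_mul_le_mul_integral_energyDensity hφ1 hR hψ1 hψ0 hc hψ' x y)
        (fun x => (ae_restrict_mem measurableSet_Ioo).mono fun y hy =>
          sq_mul_le_setIntegral_energyDensity hφ1 hφ.bc0 (hψ0 x) hy)
end
end
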